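/- arXiv:1806.10056 — 2 statements merged into one kernel-verified Lean document; each statement's English description precedes it below -/
import Mathlib

section
/- Let f : P¹ → P¹ be a rational map of degree d > 1, k ≥ 1 an integer, λ ∈ ℂ nonzero, and q a nonzero meromorphic k-differential on P¹ with f*q = λ·q. Then the set S = { x ∈ P¹ : ord_x(q) = −k } of poles of q of maximal order k is completely invariant: f⁻¹(S) = S. -/
open Polynomial OnePoint

noncomputable section

/-- The Riemann sphere `P¹ = ℂ ∪ {∞}`. -/
abbrev P1 := OnePoint ℂ

namespace ParallelTensor

/-- Order of vanishing (negative at poles) of a nonzero rational function at a finite point. -/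
def ordC (g : RatFunc ℂ) (x : ℂ) : ℤ :=
  (g.num.rootMultiplicity x : ℤ) - (g.denom.rootMultiplicity x : ℤ)

/-- Composition `g ∘ f` of rational functions. -/
def comp (g f : RatFunc ℂ) : RatFunc ℂ :=
  Polynomial.aeval f g.num / Polynomial.aeval f g.denom

/-- Derivative of a rational function. -/
def deriv (f : RatFunc ℂ) : RatFunc ℂ :=
  algebraMap (Polynomial ℂ) (RatFunc ℂ)
      (Polynomial.derivative f.num * f.denom - f.num * Polynomial.derivative f.denom) /
    algebraMap (Polynomial ℂ) (RatFunc ℂ) (f.denom ^ 2)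

/-- The (global) degree of a rational map. -/
def degRat (f : RatFunc ℂ) : ℕ := max f.num.natDegree f.denom.natDegree

/-- Evaluation of a rational map as a self-map of the Riemann sphere. -/
def evalP1 (f : RatFunc ℂ) : P1 → P1 := fun x =>
  Option.elim x
    (if 0 < f.intDegree then (∞ : P1)
     else if f.intDegree < 0 then ((0 : ℂ) : P1)
     else ((f.num.leadingCoeff / f.denom.leadingCoeff : ℂ) : P1))
    (fun z => if f.denom.eval z = 0 then (∞ : P1)
              else ((f.num.eval z / f.denom.eval z : ℂ) : P1))

/-- Local degree of `f` at a finite point: the pole order at a pole, and the order of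
vanishing of `f - f(z)` otherwise. -/
def locDegC (f : RatFunc ℂ) (z : ℂ) : ℕ :=
  if f.denom.eval z = 0 then f.denom.rootMultiplicity z
  else (ordC (f - RatFunc.C (f.num.eval z / f.denom.eval z)) z).toNat

/-- Local degree (valency) of `f` at a point of the sphere; at `∞` it is computed in the
coordinate `w = 1/z`. -/
def locDeg (f : RatFunc ℂ) : P1 → ℕ := fun x =>
  Option.elim x (locDegC (comp f (RatFunc.X)⁻¹) 0) (locDegC f)

/-- Order of the meromorphic `k`-differential `q = g·dz^k` at a point of the sphere:
`ord_x(g)` at a finite point `x`, and at `∞` the order at `0` of `g(1/w)·(-w⁻²)^k`. -/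
def ordDiff (k : ℕ) (g : RatFunc ℂ) : P1 → ℤ := fun x =>
  Option.elim x (-g.intDegree - 2 * k) (ordC g)

/-- Pullback of the `k`-differential `q = g·dz^k` under `f`, namely `g(f(z))·f'(z)^k·dz^k`. -/
def pullback (k : ℕ) (f g : RatFunc ℂ) : RatFunc ℂ := comp g f * deriv f ^ k

/-- Ramification locus of `f`: the points of local degree at least 2. -/
def Ram (f : RatFunc ℂ) : Set P1 := {x | 2 ≤ locDeg f x}

/-- The postcritical set `⋃_{n ≥ 1} fⁿ(Ram_f)`. -/
def PostCrit (f : RatFunc ℂ) : Set P1 :=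
  ⋃ (n : ℕ) (_ : 1 ≤ n), (evalP1 f)^[n] '' Ram f

end ParallelTensor


/-!
If `f` maps `x` to `y` with local degree `e`, then composing with `f` multiplies orders at `y`
by `e`, while the factor `f'^k` adds `k (e - 1)`; hence
`ord_x (f^* q) + k = e · (ord_{f x} q + k)`. Since `f^* q = λ q` has the same orders as `q`,
`ord_x q = -k` exactly when `ord_{f x} q = -k`. Poles of `f` and the point `∞` are reduced to the
finite case by the chart `w = 1/z`, using that pullback is functorial.
-/

namespace ParallelTensor

section Order

theorem ordC_eq_of_eq_div {g : RatFunc ℂ} {p q : ℂ[X]} (hp : p ≠ 0) (hq : q ≠ 0)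
    (h : g = algebraMap _ _ p / algebraMap _ _ q) (x : ℂ) :
    ordC g x = (p.rootMultiplicity x : ℤ) - q.rootMultiplicity x := by
  have hg : g ≠ 0 := by rw [h]; exact div_ne_zero (by simpa) (by simpa)
  have hcross := congrArg (rootMultiplicity x) ((RatFunc.num_mul_eq_mul_denom_iff hq).mpr h)
  rw [rootMultiplicity_mul (mul_ne_zero (RatFunc.num_ne_zero hg) hq),
    rootMultiplicity_mul (mul_ne_zero hp g.denom_ne_zero)] at hcross
  unfold ordC
  omega

theorem ordC_zero (x : ℂ) : ordC 0 x = 0 := by simp [ordC]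

theorem ordC_mul {a b : RatFunc ℂ} (ha : a ≠ 0) (hb : b ≠ 0) (x : ℂ) :
    ordC (a * b) x = ordC a x + ordC b x := by
  have hrep : a * b = algebraMap _ _ (a.num * b.num) / algebraMap _ _ (a.denom * b.denom) := by
    rw [map_mul, map_mul, ← div_mul_div_comm, RatFunc.num_div_denom, RatFunc.num_div_denom]
  have hnum := mul_ne_zero (RatFunc.num_ne_zero ha) (RatFunc.num_ne_zero hb)
  have hden := mul_ne_zero a.denom_ne_zero b.denom_ne_zero
  rw [ordC_eq_of_eq_div hnum hden hrep, rootMultiplicity_mul hnum, rootMultiplicity_mul hden]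
  unfold ordC
  push_cast
  ring

theorem ordC_inv (a : RatFunc ℂ) (x : ℂ) : ordC a⁻¹ x = -ordC a x := by
  rcases eq_or_ne a 0 with rfl | ha
  · simp [ordC_zero]
  rw [ordC_eq_of_eq_div a.denom_ne_zero (RatFunc.num_ne_zero ha)
    (by rw [← inv_div, RatFunc.num_div_denom]), ordC, neg_sub]

theorem ordC_div {a b : RatFunc ℂ} (ha : a ≠ 0) (hb : b ≠ 0) (x : ℂ) :
    ordC (a / b) x = ordC a x - ordC b x := by
  rw [div_eq_mul_inv, ordC_mul ha (inv_ne_zero hb), ordC_inv, sub_eq_add_neg]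

theorem ordC_pow {a : RatFunc ℂ} (ha : a ≠ 0) (n : ℕ) (x : ℂ) :
    ordC (a ^ n) x = n * ordC a x := by
  induction n with
  | zero => simp [ordC]
  | succ n ih => rw [pow_succ, ordC_mul (pow_ne_zero _ ha) ha, ih]; push_cast; ring

theorem ordC_algebraMap_of_eval_ne_zero {p : ℂ[X]} {x : ℂ} (hp : p.eval x ≠ 0) :
    ordC (algebraMap _ _ p) x = 0 := by
  simp [ordC, RatFunc.num_algebraMap, RatFunc.denom_algebraMap, rootMultiplicity_eq_zero hp]

theorem ordC_C (c : ℂ) (x : ℂ) : ordC (RatFunc.C c) x = 0 := by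
  rcases eq_or_ne c 0 with rfl | hc
  · simpa using ordC_zero x
  rw [← RatFunc.algebraMap_C]
  exact ordC_algebraMap_of_eval_ne_zero (by simpa)

theorem ordC_multiset_prod {s : Multiset (RatFunc ℂ)} (hs : (0 : RatFunc ℂ) ∉ s) (x : ℂ) :
    ordC s.prod x = (s.map (ordC · x)).sum := by
  induction s using Multiset.induction with
  | empty => simp [ordC]
  | cons a t ih =>
    rw [Multiset.mem_cons, not_or] at hs
    rw [Multiset.prod_cons, ordC_mul (Ne.symm hs.1) (Multiset.prod_ne_zero hs.2),
      Multiset.map_cons, Multiset.sum_cons, ih hs.2]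

end Order

section Composition

theorem transcendental_iff_forall_ne_C {f : RatFunc ℂ} :
    Transcendental ℂ f ↔ ∀ c : ℂ, f ≠ RatFunc.C c := by
  refine ⟨fun hf c h => hf (h ▸ isAlgebraic_algebraMap c), fun h halg => ?_⟩
  have hdeg := IsAlgClosed.degree_eq_one_of_irreducible ℂ (minpoly.irreducible halg.isIntegral)
  obtain ⟨c, hc⟩ := minpoly.degree_eq_one_iff.mp hdeg
  exact h c (hc ▸ rfl)

def compHom (f : RatFunc ℂ) (hf : Transcendental ℂ f) : RatFunc ℂ →ₐ[ℂ] RatFunc ℂ :=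
  RatFunc.liftAlgHom (aeval f)
    (nonZeroDivisors_le_comap_nonZeroDivisors_of_injective _ (transcendental_iff_injective.mp hf))

variable {f : RatFunc ℂ} (hf : Transcendental ℂ f)
include hf

theorem comp_eq_compHom (g : RatFunc ℂ) : comp g f = compHom f hf g :=
  (RatFunc.liftAlgHom_apply _ _ g).symm

theorem comp_eq_div {g : RatFunc ℂ} {p q : ℂ[X]}
    (h : g = algebraMap _ _ p / algebraMap _ _ q) : comp g f = aeval f p / aeval f q := by
  rw [comp_eq_compHom hf, h, compHom, RatFunc.liftAlgHom_apply_div]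

theorem comp_comp (g h : RatFunc ℂ) : comp (comp g h) f = comp g (comp h f) := by
  rw [comp_eq_compHom hf, comp_eq_compHom hf h, comp, comp, map_div₀,
    ← aeval_algHom_apply, ← aeval_algHom_apply]

theorem aeval_ne_zero {p : ℂ[X]} (hp : p ≠ 0) : aeval f p ≠ 0 :=
  (map_ne_zero_iff _ (transcendental_iff_injective.mp hf)).mpr hp

theorem comp_ne_zero {g : RatFunc ℂ} (hg : g ≠ 0) : comp g f ≠ 0 :=
  div_ne_zero (aeval_ne_zero hf (RatFunc.num_ne_zero hg)) (aeval_ne_zero hf g.denom_ne_zero)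

theorem transcendental_comp {h : RatFunc ℂ} (hh : Transcendental ℂ h) :
    Transcendental ℂ (comp h f) := by
  rw [transcendental_iff_injective] at hh ⊢
  rw [comp_eq_compHom hf, aeval_algHom, AlgHom.coe_comp]
  exact (RatFunc.liftAlgHom_injective _ (transcendental_iff_injective.mp hf)).comp hh

end Composition

section Derivative

theorem deriv_eq_div {g : RatFunc ℂ} {p q : ℂ[X]} (hq : q ≠ 0)
    (h : g = algebraMap _ _ p / algebraMap _ _ q) :
    deriv g = algebraMap _ _ (derivative p * q - p * derivative q) / algebraMap _ _ (q ^ 2) := by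
  have hcross : g.num * q = p * g.denom := (RatFunc.num_mul_eq_mul_denom_iff hq).mpr h
  have hcross' : derivative g.num * q + g.num * derivative q
      = derivative p * g.denom + p * derivative g.denom := by
    simpa only [derivative_mul] using congrArg derivative hcross
  rw [deriv, div_eq_div_iff (by simpa using g.denom_ne_zero) (by simpa using hq), ← map_mul,
    ← map_mul]
  refine congrArg _ ?_
  linear_combination (g.denom * q) * hcross' -
    (derivative g.denom * q + g.denom * derivative q) * hcross

theorem deriv_add (a b : RatFunc ℂ) : deriv (a + b) = deriv a + deriv b := by
  have ha : algebraMap ℂ[X] (RatFunc ℂ) a.denom ≠ 0 := by simpa using a.denom_ne_zero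
  have hb : algebraMap ℂ[X] (RatFunc ℂ) b.denom ≠ 0 := by simpa using b.denom_ne_zero
  have hrep : a + b = algebraMap _ _ (a.num * b.denom + b.num * a.denom) /
      algebraMap _ _ (a.denom * b.denom) := by
    rw [← RatFunc.num_div_denom a, ← RatFunc.num_div_denom b, div_add_div _ _ ha hb]
    simp only [map_mul, map_add, RatFunc.num_div_denom]
    ring
  rw [deriv_eq_div (mul_ne_zero a.denom_ne_zero b.denom_ne_zero) hrep, deriv, deriv]
  simp only [derivative_mul, map_mul, map_add, map_sub, map_pow]
  field_simp
  ring

theorem deriv_mul (a b : RatFunc ℂ) : deriv (a * b) = deriv a * b + a * deriv b := by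
  have ha : algebraMap ℂ[X] (RatFunc ℂ) a.denom ≠ 0 := by simpa using a.denom_ne_zero
  have hb : algebraMap ℂ[X] (RatFunc ℂ) b.denom ≠ 0 := by simpa using b.denom_ne_zero
  have hrep : a * b = algebraMap _ _ (a.num * b.num) / algebraMap _ _ (a.denom * b.denom) := by
    rw [map_mul, map_mul, ← div_mul_div_comm, RatFunc.num_div_denom, RatFunc.num_div_denom]
  rw [deriv_eq_div (mul_ne_zero a.denom_ne_zero b.denom_ne_zero) hrep, deriv, deriv]
  have ea := (RatFunc.num_div_denom a).symm
  have eb := (RatFunc.num_div_denom b).symm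
  generalize a.num = p, a.denom = q at *
  generalize b.num = r, b.denom = s at *
  subst ea eb
  simp only [derivative_mul, map_mul, map_add, map_sub, map_pow]
  field_simp
  ring

theorem deriv_algebraMap (p : ℂ[X]) :
    deriv (algebraMap _ _ p) = algebraMap _ _ (derivative p) := by
  simp [deriv, RatFunc.num_algebraMap, RatFunc.denom_algebraMap]

theorem deriv_smul (c : ℂ) (a : RatFunc ℂ) : deriv (c • a) = c • deriv a := by
  rw [Algebra.smul_def, Algebra.smul_def, deriv_mul, RatFunc.algebraMap_eq_C,
    ← RatFunc.algebraMap_C, deriv_algebraMap, derivative_C, map_zero, zero_mul, zero_add]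

def derivation : Derivation ℂ (RatFunc ℂ) (RatFunc ℂ) :=
  Derivation.mk' ⟨⟨deriv, deriv_add⟩, deriv_smul⟩ fun a b => by
    simp only [LinearMap.coe_mk, AddHom.coe_mk, smul_eq_mul, deriv_mul]
    ring

theorem derivation_apply (a : RatFunc ℂ) : derivation a = deriv a := rfl

theorem deriv_comp {f : RatFunc ℂ} (hf : Transcendental ℂ f) (g : RatFunc ℂ) :
    deriv (comp g f) = comp (deriv g) f * deriv f := by
  have hden := aeval_ne_zero hf g.denom_ne_zero
  rw [comp_eq_div hf (rfl : deriv g = _), comp, ← derivation_apply, Derivation.leibniz_div,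
    derivation.map_aeval, derivation.map_aeval]
  simp only [derivation_apply, smul_eq_mul, map_sub, map_mul, map_pow]
  field_simp

theorem pullback_pullback (k : ℕ) {f : RatFunc ℂ} (hf : Transcendental ℂ f)
    (g h : RatFunc ℂ) :
    pullback k f (pullback k h g) = pullback k (comp h f) g := by
  rw [pullback, pullback, pullback, comp_eq_compHom hf, map_mul, map_pow, ← comp_eq_compHom hf,
    ← comp_eq_compHom hf, comp_comp hf, deriv_comp hf, mul_pow, mul_assoc]

end Derivative

section LocalOrder

theorem ordC_aeval {F : RatFunc ℂ} (hF : Transcendental ℂ F) {p : ℂ[X]} (hp : p ≠ 0)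
    (x : ℂ) :
    ordC (aeval F p) x = (p.roots.map fun r => ordC (F - RatFunc.C r) x).sum := by
  have hfactor : (⇑(aeval F) ∘ fun r => X - C r) = fun r => F - RatFunc.C r := by
    ext r; simp [RatFunc.algebraMap_eq_C]
  have hprod : (0 : RatFunc ℂ) ∉ p.roots.map fun r => F - RatFunc.C r := by
    rw [Multiset.mem_map]
    rintro ⟨r, -, hr⟩
    exact transcendental_iff_forall_ne_C.mp hF r (sub_eq_zero.mp hr)
  conv_lhs => rw [(IsAlgClosed.splits p).eq_prod_roots]
  rw [map_mul, map_multiset_prod, Multiset.map_map, hfactor, aeval_C, RatFunc.algebraMap_eq_C,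
    ordC_mul (by simpa using hp) (Multiset.prod_ne_zero hprod), ordC_C, zero_add,
    ordC_multiset_prod hprod, Multiset.map_map]
  rfl

variable {F : RatFunc ℂ} {A B : ℂ[X]} {x y : ℂ}
  (hrep : F = algebraMap _ _ A / algebraMap _ _ B) (hB : B.eval x ≠ 0)
include hrep hB

theorem sub_C_eq_div_of_eq_div (r : ℂ) :
    F - RatFunc.C r = algebraMap _ _ (A - C r * B) / algebraMap _ _ B := by
  have hB' : algebraMap ℂ[X] (RatFunc ℂ) B ≠ 0 := by
    simpa using fun h : B = 0 => hB (by simp [h])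
  rw [hrep, map_sub, map_mul, RatFunc.algebraMap_C, sub_div, mul_div_cancel_right₀ _ hB']

variable (hF : Transcendental ℂ F)
include hF

theorem sub_C_mul_ne_zero (r : ℂ) : A - C r * B ≠ 0 := fun h => by
  have := sub_C_eq_div_of_eq_div hrep hB r
  rw [h, map_zero, zero_div, sub_eq_zero] at this
  exact transcendental_iff_forall_ne_C.mp hF r this

theorem ordC_sub_C_of_eq_div (r : ℂ) :
    ordC (F - RatFunc.C r) x = (A - C r * B).rootMultiplicity x := by
  rw [ordC_eq_of_eq_div (sub_C_mul_ne_zero hrep hB hF r) (fun h => hB (by simp [h]))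
    (sub_C_eq_div_of_eq_div hrep hB r), rootMultiplicity_eq_zero hB, Nat.cast_zero, sub_zero]

variable (hA : A.eval x = y * B.eval x)
include hA

theorem one_le_rootMultiplicity_sub_C_mul : 1 ≤ (A - C y * B).rootMultiplicity x :=
  (rootMultiplicity_pos (sub_C_mul_ne_zero hrep hB hF y)).mpr (by simp [hA])

theorem ordC_aeval_of_eq_div {p : ℂ[X]} (hp : p ≠ 0) :
    ordC (aeval F p) x = p.rootMultiplicity y * (A - C y * B).rootMultiplicity x := by
  classical
  rw [ordC_aeval hF hp, Multiset.sum_map_eq_nsmul_single y, count_roots,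
    ordC_sub_C_of_eq_div hrep hB hF, nsmul_eq_mul]
  intro r hr _
  rw [ordC_sub_C_of_eq_div hrep hB hF, rootMultiplicity_eq_zero, Nat.cast_zero]
  simp only [IsRoot, eval_sub, eval_mul, eval_C, hA, ← sub_mul]
  exact mul_ne_zero (sub_ne_zero.mpr (Ne.symm hr)) hB

theorem ordC_comp_of_eq_div {g : RatFunc ℂ} (hg : g ≠ 0) :
    ordC (comp g F) x = ordC g y * (A - C y * B).rootMultiplicity x := by
  rw [comp, ordC_div (aeval_ne_zero hF (RatFunc.num_ne_zero hg)) (aeval_ne_zero hF g.denom_ne_zero),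
    ordC_aeval_of_eq_div hrep hB hF hA (RatFunc.num_ne_zero hg),
    ordC_aeval_of_eq_div hrep hB hF hA g.denom_ne_zero, ordC, sub_mul]

theorem ordC_deriv_of_eq_div :
    deriv F ≠ 0 ∧ ordC (deriv F) x = (A - C y * B).rootMultiplicity x - 1 := by
  -- `deriv F = deriv (F - y)`, and `F - y = N / B` where `N` vanishes to order `m + 1` at `x`.
  set N := A - C y * B
  obtain ⟨u, hNu, hu⟩ := N.exists_eq_pow_rootMultiplicity_mul_and_not_dvd
    (sub_C_mul_ne_zero hrep hB hF y) x
  have hux : u.eval x ≠ 0 := fun h => hu (dvd_iff_isRoot.mpr h)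
  obtain ⟨m, hm⟩ : ∃ m, N.rootMultiplicity x = m + 1 :=
    Nat.exists_eq_add_of_le' (one_le_rootMultiplicity_sub_C_mul hrep hB hF hA)
  rw [hm] at hNu ⊢
  set M := (C ((m : ℂ) + 1) * u + (X - C x) * derivative u) * B - (X - C x) * u * derivative B
  have hMx : M.eval x ≠ 0 := by
    simp only [M, eval_sub, eval_add, eval_mul, eval_C, eval_X, sub_self, zero_mul, add_zero,
      sub_zero]
    exact mul_ne_zero (mul_ne_zero (Nat.cast_add_one_ne_zero m) hux) hB
  have hM : M ≠ 0 := fun h => hMx (by simp [h])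
  have hwronskian : derivative N * B - N * derivative B = (X - C x) ^ m * M := by
    rw [hNu, derivative_mul, derivative_X_sub_C_pow]
    push_cast
    ring
  have hwronskian_ne_zero : derivative N * B - N * derivative B ≠ 0 := by
    rw [hwronskian]
    exact mul_ne_zero (pow_ne_zero _ (X_sub_C_ne_zero x)) hM
  have hB0 : B ≠ 0 := fun h => hB (by simp [h])
  have hderiv : deriv F = algebraMap _ _ (derivative N * B - N * derivative B) /
      algebraMap _ _ (B ^ 2) := by
    rw [← deriv_eq_div hB0 (sub_C_eq_div_of_eq_div hrep hB y), ← derivation_apply,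
      ← derivation_apply, map_sub, ← RatFunc.algebraMap_eq_C, Derivation.map_algebraMap,
      sub_zero]
  refine ⟨?_, ?_⟩
  · rw [hderiv]
    exact div_ne_zero (RatFunc.algebraMap_ne_zero hwronskian_ne_zero)
      (RatFunc.algebraMap_ne_zero (pow_ne_zero 2 hB0))
  · rw [ordC_eq_of_eq_div hwronskian_ne_zero (pow_ne_zero 2 hB0) hderiv, hwronskian,
      rootMultiplicity_mul (mul_ne_zero (pow_ne_zero _ (X_sub_C_ne_zero x)) hM),
      rootMultiplicity_X_sub_C_pow, rootMultiplicity_eq_zero hMx,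
      rootMultiplicity_eq_zero (by simpa using hB)]
    push_cast
    ring

theorem ordC_pullback_of_eq_div (k : ℕ) {g : RatFunc ℂ} (hg : g ≠ 0) :
    ordC (pullback k F g) x =
      (A - C y * B).rootMultiplicity x * (ordC g y + k) - k := by
  obtain ⟨hderiv, hord⟩ := ordC_deriv_of_eq_div hrep hB hF hA
  rw [pullback, ordC_mul (comp_ne_zero hF hg) (pow_ne_zero _ hderiv), ordC_pow hderiv, hord,
    ordC_comp_of_eq_div hrep hB hF hA hg]
  ring

end LocalOrder

section Infinity

theorem transcendental_inv_X : Transcendental ℂ (RatFunc.X⁻¹ : RatFunc ℂ) :=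
  fun h => RatFunc.transcendental_X (IsAlgebraic.inv_iff.mp h)

theorem aeval_inv_X_eq_div (p : ℂ[X]) {M : ℕ} (hM : p.natDegree ≤ M) :
    aeval (RatFunc.X⁻¹ : RatFunc ℂ) p =
      algebraMap ℂ[X] _ (reflect M p) / algebraMap ℂ[X] _ (X ^ M) := by
  let _ : Invertible (RatFunc.X⁻¹ : RatFunc ℂ) :=
    invertibleOfNonzero (inv_ne_zero RatFunc.X_ne_zero)
  have h := eval₂_reflect_mul_pow (algebraMap ℂ (RatFunc ℂ)) RatFunc.X⁻¹ M p hM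
  rw [invOf_eq_inv, inv_inv, ← aeval_def, ← aeval_def, ← RatFunc.algebraMap_X (K := ℂ),
    aeval_algebraMap_apply, aeval_X_left_apply, RatFunc.algebraMap_X] at h
  rw [← h, map_pow, RatFunc.algebraMap_X, inv_pow, div_eq_mul_inv]

theorem eval_zero_reflect (M : ℕ) (p : ℂ[X]) : (reflect M p).eval 0 = p.coeff M := by
  rw [← coeff_zero_eq_eval_zero, coeff_reflect, revAt_le (Nat.zero_le M), Nat.sub_zero]

theorem rootMultiplicity_zero_X_pow (M : ℕ) : (X ^ M : ℂ[X]).rootMultiplicity 0 = M := by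
  simpa using rootMultiplicity_X_sub_C_pow (0 : ℂ) M

theorem comp_inv_X_eq_div (f : RatFunc ℂ) :
    comp f RatFunc.X⁻¹ = algebraMap _ _ (reflect (degRat f) f.num) /
      algebraMap _ _ (reflect (degRat f) f.denom) := by
  rw [comp, aeval_inv_X_eq_div _ (le_max_left _ _), aeval_inv_X_eq_div _ (le_max_right _ _),
    div_div_div_cancel_right₀ (RatFunc.algebraMap_ne_zero (pow_ne_zero _ X_ne_zero)), degRat]

theorem ordC_aeval_inv_X {p : ℂ[X]} (hp : p ≠ 0) :
    ordC (aeval (RatFunc.X⁻¹ : RatFunc ℂ) p) 0 = -p.natDegree := by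
  have hlead : (reflect p.natDegree p).eval 0 ≠ 0 := by
    rw [eval_zero_reflect, coeff_natDegree]
    exact leadingCoeff_ne_zero.mpr hp
  rw [ordC_eq_of_eq_div (fun h => hlead (by simp [h])) (pow_ne_zero _ X_ne_zero)
    (aeval_inv_X_eq_div p le_rfl), rootMultiplicity_eq_zero hlead, rootMultiplicity_zero_X_pow,
    Nat.cast_zero, zero_sub]

theorem ordC_comp_inv_X {h : RatFunc ℂ} (hh : h ≠ 0) :
    ordC (comp h RatFunc.X⁻¹) 0 = -h.intDegree := by
  rw [comp, ordC_div (aeval_ne_zero transcendental_inv_X (RatFunc.num_ne_zero hh))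
    (aeval_ne_zero transcendental_inv_X h.denom_ne_zero), ordC_aeval_inv_X (RatFunc.num_ne_zero hh),
    ordC_aeval_inv_X h.denom_ne_zero, RatFunc.intDegree]
  ring

theorem ordC_deriv_inv_X : ordC (deriv (RatFunc.X⁻¹ : RatFunc ℂ)) 0 = -2 := by
  have hrep : (RatFunc.X⁻¹ : RatFunc ℂ) =
      algebraMap _ _ (1 : ℂ[X]) / algebraMap ℂ[X] _ X := by
    rw [map_one, RatFunc.algebraMap_X, one_div]
  rw [ordC_eq_of_eq_div (by simp) (pow_ne_zero 2 X_ne_zero) (deriv_eq_div X_ne_zero hrep)]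
  simp [rootMultiplicity_zero_X_pow]

theorem deriv_ne_zero {F : RatFunc ℂ} (hF : Transcendental ℂ F) : deriv F ≠ 0 := by
  obtain ⟨z, hz⟩ := F.denom.exists_eval_ne_zero_of_natDegree_lt_card F.denom_ne_zero
    (Cardinal.natCast_lt_aleph0.trans_le (Cardinal.aleph0_le_mk ℂ))
  exact (ordC_deriv_of_eq_div (RatFunc.num_div_denom F).symm hz hF
    (div_mul_cancel₀ _ hz).symm).1

theorem pullback_ne_zero (k : ℕ) {F g : RatFunc ℂ} (hF : Transcendental ℂ F) (hg : g ≠ 0) :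
    pullback k F g ≠ 0 :=
  mul_ne_zero (comp_ne_zero hF hg) (pow_ne_zero _ (deriv_ne_zero hF))

theorem ordC_pullback_inv_X (k : ℕ) {g : RatFunc ℂ} (hg : g ≠ 0) :
    ordC (pullback k RatFunc.X⁻¹ g) 0 = ordDiff k g ∞ := by
  have hderiv := deriv_ne_zero transcendental_inv_X
  rw [pullback, ordC_mul (comp_ne_zero transcendental_inv_X hg) (pow_ne_zero _ hderiv),
    ordC_pow hderiv, ordC_comp_inv_X hg, ordC_deriv_inv_X]
  simp only [ordDiff, Option.elim]
  ring

end Infinity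

section Sphere

def evalFrac (A B : ℂ[X]) (x : ℂ) : P1 :=
  if B.eval x = 0 then ∞ else ((A.eval x / B.eval x : ℂ) : P1)

theorem comp_X {f : RatFunc ℂ} (hf : Transcendental ℂ f) : comp RatFunc.X f = f := by
  rw [comp_eq_div hf (p := X) (q := 1) (by rw [map_one, div_one, RatFunc.algebraMap_X]),
    aeval_X, map_one, div_one]

theorem ordDiff_pullback_of_eq_div (k : ℕ) {F g : RatFunc ℂ} {A B : ℂ[X]} {x : ℂ}
    (hF : Transcendental ℂ F) (hrep : F = algebraMap _ _ A / algebraMap _ _ B)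
    (hAB : A.eval x ≠ 0 ∨ B.eval x ≠ 0) (hg : g ≠ 0) :
    ∃ e : ℕ, 0 < e ∧
      ordC (pullback k F g) x = e * (ordDiff k g (evalFrac A B x) + k) - k := by
  by_cases hB : B.eval x = 0
  · -- At a pole, `F = 1/z ∘ F⁻¹` and `F⁻¹` vanishes at `x`.
    have hA := hAB.resolve_right (not_not.mpr hB)
    have hinv : F⁻¹ = algebraMap _ _ B / algebraMap _ _ A := by rw [hrep, inv_div]
    have hFinv : Transcendental ℂ F⁻¹ := fun h => hF (IsAlgebraic.inv_iff.mp h)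
    have hB0 : B.eval x = 0 * A.eval x := by rw [hB, zero_mul]
    have hpb : pullback k F g = pullback k F⁻¹ (pullback k RatFunc.X⁻¹ g) := by
      rw [pullback_pullback k hFinv, comp_eq_compHom hFinv, map_inv₀, ← comp_eq_compHom hFinv,
        comp_X hFinv, inv_inv]
    refine ⟨_, one_le_rootMultiplicity_sub_C_mul hinv hA hFinv hB0, ?_⟩
    rw [hpb, ordC_pullback_of_eq_div hinv hA hFinv hB0 k
      (pullback_ne_zero k transcendental_inv_X hg), ordC_pullback_inv_X k hg, evalFrac, if_pos hB]
  · have hA : A.eval x = A.eval x / B.eval x * B.eval x := (div_mul_cancel₀ _ hB).symm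
    refine ⟨_, one_le_rootMultiplicity_sub_C_mul hrep hB hF hA, ?_⟩
    rw [ordC_pullback_of_eq_div hrep hB hF hA k hg, evalFrac, if_neg hB]
    rfl

theorem evalP1_infty_eq_evalFrac (f : RatFunc ℂ) :
    evalP1 f ∞ = evalFrac (reflect (degRat f) f.num) (reflect (degRat f) f.denom) 0 := by
  have hden := leadingCoeff_ne_zero.mpr f.denom_ne_zero
  have hint : f.intDegree = f.num.natDegree - f.denom.natDegree := rfl
  simp only [evalP1, evalFrac, Option.elim, eval_zero_reflect, degRat]
  rcases lt_trichotomy f.num.natDegree f.denom.natDegree with hlt | heq | hgt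
  · rw [max_eq_right hlt.le, coeff_natDegree, if_neg hden, coeff_eq_zero_of_natDegree_lt hlt,
      zero_div, if_neg (by omega), if_pos (by omega)]
  · rw [heq, max_self, coeff_natDegree, if_neg hden, ← heq, coeff_natDegree, if_neg (by omega),
      if_neg (by omega)]
  · rw [max_eq_left hgt.le, coeff_eq_zero_of_natDegree_lt hgt, if_pos rfl, if_pos (by omega)]

theorem eval_zero_reflect_num_ne_zero_or (f : RatFunc ℂ) :
    (reflect (degRat f) f.num).eval 0 ≠ 0 ∨ (reflect (degRat f) f.denom).eval 0 ≠ 0 := by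
  simp only [eval_zero_reflect, degRat]
  rcases le_or_gt f.num.natDegree f.denom.natDegree with hle | hgt
  · rw [max_eq_right hle, coeff_natDegree]
    exact .inr (leadingCoeff_ne_zero.mpr f.denom_ne_zero)
  · rw [max_eq_left hgt.le, coeff_natDegree]
    refine .inl (leadingCoeff_ne_zero.mpr fun h => ?_)
    simp [h] at hgt

theorem ordDiff_pullback (k : ℕ) {f g : RatFunc ℂ} (hf : Transcendental ℂ f) (hg : g ≠ 0)
    (x : P1) : ∃ e : ℕ, 0 < e ∧
      ordDiff k (pullback k f g) x = e * (ordDiff k g (evalP1 f x) + k) - k := by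
  induction x using OnePoint.rec with
  | infty =>
    rw [← ordC_pullback_inv_X k (pullback_ne_zero k hf hg),
      pullback_pullback k transcendental_inv_X, evalP1_infty_eq_evalFrac]
    exact ordDiff_pullback_of_eq_div k (transcendental_comp transcendental_inv_X hf)
      (comp_inv_X_eq_div f) (eval_zero_reflect_num_ne_zero_or f) hg
  | coe z =>
    exact ordDiff_pullback_of_eq_div k hf (RatFunc.num_div_denom f).symm
      (by simpa using aeval_ne_zero_of_isCoprime f.isCoprime_num_denom z) hg

theorem ordDiff_C_mul (k : ℕ) {g : RatFunc ℂ} (hg : g ≠ 0) {lam : ℂ} (hlam : lam ≠ 0)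
    (x : P1) :
    ordDiff k (RatFunc.C lam * g) x = ordDiff k g x := by
  have hC : RatFunc.C lam ≠ 0 := by simpa using hlam
  induction x using OnePoint.rec with
  | infty => simp only [ordDiff, Option.elim, RatFunc.intDegree_mul hC hg, RatFunc.intDegree_C,
      zero_add]
  | coe z => simp only [ordDiff, Option.elim, ordC_mul hC hg, ordC_C, zero_add]

theorem transcendental_of_one_lt_degRat {f : RatFunc ℂ} (hf : 1 < degRat f) :
    Transcendental ℂ f :=
  transcendental_iff_forall_ne_C.mpr fun c hc => by simp [hc, degRat] at hf

theorem mul_add_sub_eq_neg_iff {e : ℕ} (he : 0 < e) (a k : ℤ) :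
    e * (a + k) - k = -k ↔ a = -k := by
  rw [sub_eq_neg_self, mul_eq_zero, Nat.cast_eq_zero, or_iff_right he.ne', add_eq_zero_iff_eq_neg]

end Sphere

end ParallelTensor

theorem stmt_4_general (f g : RatFunc ℂ) (d k : ℕ) (lam : ℂ)
    (hdeg : ParallelTensor.degRat f = d) (hd : 1 < d)
    (hg : g ≠ 0) (hlam : lam ≠ 0)
    (heq : ParallelTensor.pullback k f g = RatFunc.C lam * g) :
    ParallelTensor.evalP1 f ⁻¹' {x : P1 | ParallelTensor.ordDiff k g x = -(k : ℤ)}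
      = {x : P1 | ParallelTensor.ordDiff k g x = -(k : ℤ)} := by
  open ParallelTensor in
  have hf : Transcendental ℂ f := transcendental_of_one_lt_degRat (hdeg ▸ hd)
  ext x
  obtain ⟨e, he, hord⟩ := ordDiff_pullback k hf hg x
  rw [heq, ordDiff_C_mul k hg hlam] at hord
  rw [Set.mem_preimage, Set.mem_ofPred_eq, Set.mem_ofPred_eq, hord, mul_add_sub_eq_neg_iff he]

/-- If `f*q = λ·q` then the set of poles of `q` of maximal order `k` is completely
invariant: `f⁻¹(S) = S`. -/
theorem stmt_4 (f g : RatFunc ℂ) (d k : ℕ) (lam : ℂ)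
    (hdeg : ParallelTensor.degRat f = d) (hd : 1 < d) (hk : 1 ≤ k)
    (hg : g ≠ 0) (hlam : lam ≠ 0)
    (heq : ParallelTensor.pullback k f g = RatFunc.C lam * g) :
    ParallelTensor.evalP1 f ⁻¹' {x : P1 | ParallelTensor.ordDiff k g x = -(k : ℤ)}
      = {x : P1 | ParallelTensor.ordDiff k g x = -(k : ℤ)} :=
  stmt_4_general f g d k lam hdeg hd hg hlam heq
end
end

section
/- Let n ≥ 2, let α ∈ ℂ be a primitive n-th root of unity, let k ≥ 1, λ ∈ ℂ nonzero, and let q ∈ ℂ(z) be a nonzero rational function satisfying q(α z)·α^k = λ·q(z) (i.e. the k-differential q(z) dz^k is parallel under f(z) = α z with eigenvalue λ). Then λ = α^j for some integer 0 ≤ j < n, and there exists a rational function g ∈ ℂ(t) such that q(z) = g(z^n)·z^{j−k}. -/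
open Polynomial OnePoint

noncomputable section

/-!
Substituting `z ↦ αz` multiplies the coefficient of `zᵐ` by `αᵐ`, so a polynomial eigenfunction of
the substitution has all its exponents in one residue class `r` modulo `n`: it is `zʳ·p(zⁿ)`.
Numerator and denominator of `q` are coprime and stay coprime after the substitution, so
`q(αz) = μ·q(z)` forces each of them to be an eigenfunction. Dividing gives
`q = z^(r₁ - r₂)·g(zⁿ)` with `μ = α^(r₁ - r₂)`; the factor `α^k` of the differential shifts the
exponent by `k`, and reducing `r₁ - r₂ + k` modulo `n` gives `j`.
-/

theorem IsCoprime.associated_of_mul_eq_mul {R : Type*} [CommRing R] [IsDomain R] {a b c d : R}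
    (hab : IsCoprime a b) (hcd : IsCoprime c d) (h : a * d = c * b) : Associated b d :=
  associated_of_dvd_dvd
    (hab.symm.dvd_of_dvd_mul_right ⟨c, by rw [mul_comm d, h, mul_comm]⟩)
    (hcd.symm.dvd_of_dvd_mul_left ⟨a, by rw [← h, mul_comm]⟩)

namespace Polynomial

variable {R : Type*}

theorem comp_eq_zero_iff_of_natDegree_ne_zero [Semiring R] [NoZeroDivisors R] {p q : R[X]}
    (hq : q.natDegree ≠ 0) : p.comp q = 0 ↔ p = 0 := by
  refine comp_eq_zero_iff.trans (or_iff_left fun h => hq ?_)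
  rw [h.2, natDegree_C]

theorem expand_contract_of_coeff_eq_zero [CommSemiring R] {n : ℕ} (hn : 0 < n) {P : R[X]}
    (hP : ∀ m, ¬ n ∣ m → P.coeff m = 0) : expand R n (contract n P) = P := by
  ext m
  rw [coeff_expand hn]
  split_ifs with hm
  · rw [coeff_contract hn.ne', Nat.div_mul_cancel hm]
  · exact (hP m hm).symm

theorem exists_eq_expand_mul_X_pow [CommSemiring R] {n r : ℕ} (hr : r < n) {P : R[X]}
    (hP : ∀ m, P.coeff m ≠ 0 → m ≡ r [MOD n]) : ∃ p : R[X], P = expand R n p * X ^ r := by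
  obtain ⟨P', rfl⟩ : X ^ r ∣ P := by
    refine X_pow_dvd_iff.mpr fun d hd => by_contra fun hd0 => hd.ne ?_
    rw [← Nat.mod_eq_of_lt hr, ← Nat.mod_eq_of_lt (hd.trans hr)]
    exact hP d hd0
  have hP' : ∀ m, ¬ n ∣ m → P'.coeff m = 0 := fun m hm => by
    by_contra hm0
    refine hm ((Nat.modEq_zero_iff_dvd).mp (Nat.ModEq.add_right_cancel' r ?_))
    rw [zero_add]
    exact hP (m + r) (by rwa [coeff_X_pow_mul])
  exact ⟨contract n P', by rw [expand_contract_of_coeff_eq_zero (r.zero_le.trans_lt hr) hP',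
    mul_comm]⟩

theorem exists_eq_expand_mul_X_pow_of_comp_C_mul_X_eq [CommRing R] [IsDomain R] {n : ℕ}
    (hn : 0 < n) {α : R} (hα : IsPrimitiveRoot α n) {P : R[X]} (hP : P ≠ 0) {c : R}
    (h : P.comp (C α * X) = C c * P) :
    ∃ r < n, c = α ^ r ∧ ∃ p : R[X], P = expand R n p * X ^ r := by
  have hpow : ∀ a b : ℕ, α ^ a = α ^ b ↔ a ≡ b [MOD n] := fun a b => by
    rw [hα.eq_orderOf]
    exact (hα.isOfFinOrder hn.ne').pow_eq_pow_iff_modEq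
  have hcoeff : ∀ m, P.coeff m ≠ 0 → α ^ m = c := fun m hm =>
    mul_left_cancel₀ hm (by rw [← comp_C_mul_X_coeff, h, coeff_C_mul, mul_comm])
  obtain ⟨m₀, hm₀⟩ := support_nonempty.mpr hP
  have hm₀ : P.coeff m₀ ≠ 0 := mem_support_iff.mp hm₀
  have hmodEq : ∀ m, P.coeff m ≠ 0 → m ≡ m₀ % n [MOD n] := fun m hm =>
    ((hpow m m₀).mp (by rw [hcoeff m hm, hcoeff m₀ hm₀])).trans (Nat.mod_modEq m₀ n).symm
  refine ⟨m₀ % n, Nat.mod_lt _ hn, ?_, exists_eq_expand_mul_X_pow (Nat.mod_lt _ hn) hmodEq⟩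
  rw [← hcoeff m₀ hm₀, hpow]
  exact (Nat.mod_modEq m₀ n).symm

end Polynomial

namespace ParallelTensor

theorem comp_algebraMap (g : RatFunc ℂ) (p : ℂ[X]) :
    comp g (algebraMap ℂ[X] (RatFunc ℂ) p) =
      algebraMap ℂ[X] (RatFunc ℂ) (g.num.comp p) /
        algebraMap ℂ[X] (RatFunc ℂ) (g.denom.comp p) := by
  rw [comp, aeval_algebraMap_apply, aeval_algebraMap_apply, comp_eq_aeval, comp_eq_aeval]

theorem aeval_algebraMap_injective {p : ℂ[X]} (hp : p.natDegree ≠ 0) :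
    Function.Injective (aeval (R := ℂ) (algebraMap ℂ[X] (RatFunc ℂ) p)) := by
  refine (injective_iff_map_eq_zero _).mpr fun a ha => ?_
  rwa [aeval_algebraMap_apply, map_eq_zero_iff _ (RatFunc.algebraMap_injective ℂ),
    ← comp_eq_aeval, comp_eq_zero_iff_of_natDegree_ne_zero hp] at ha

def compAlgHom (p : ℂ[X]) (hp : p.natDegree ≠ 0) : RatFunc ℂ →ₐ[ℂ] RatFunc ℂ :=
  RatFunc.liftAlgHom (aeval (algebraMap ℂ[X] (RatFunc ℂ) p))
    (nonZeroDivisors_le_comap_nonZeroDivisors_of_injective _ (aeval_algebraMap_injective hp))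

theorem comp_algebraMap_eq_compAlgHom {p : ℂ[X]} (hp : p.natDegree ≠ 0) (g : RatFunc ℂ) :
    comp g (algebraMap ℂ[X] (RatFunc ℂ) p) = compAlgHom p hp g :=
  (RatFunc.liftAlgHom_apply _ _ g).symm

theorem compAlgHom_algebraMap {p : ℂ[X]} (hp : p.natDegree ≠ 0) (a : ℂ[X]) :
    compAlgHom p hp (algebraMap ℂ[X] (RatFunc ℂ) a) = algebraMap ℂ[X] (RatFunc ℂ) (a.comp p) := by
  rw [← comp_algebraMap_eq_compAlgHom, comp_algebraMap, RatFunc.num_algebraMap,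
    RatFunc.denom_algebraMap, one_comp, map_one, div_one]

theorem compAlgHom_X {p : ℂ[X]} (hp : p.natDegree ≠ 0) :
    compAlgHom p hp RatFunc.X = algebraMap ℂ[X] (RatFunc ℂ) p := by
  rw [← RatFunc.algebraMap_X, compAlgHom_algebraMap, X_comp]

theorem comp_X_pow_eq_compAlgHom {n : ℕ} (hn : n ≠ 0) (g : RatFunc ℂ) :
    comp g (RatFunc.X ^ n) = compAlgHom (X ^ n) ((natDegree_X_pow n).trans_ne hn) g := by
  rw [← comp_algebraMap_eq_compAlgHom, map_pow, RatFunc.algebraMap_X]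

theorem comp_div_X_pow {n : ℕ} (hn : n ≠ 0) (a b : ℂ[X]) :
    comp (algebraMap ℂ[X] (RatFunc ℂ) a / algebraMap ℂ[X] (RatFunc ℂ) b) (RatFunc.X ^ n) =
      algebraMap ℂ[X] (RatFunc ℂ) (expand ℂ n a) / algebraMap ℂ[X] (RatFunc ℂ) (expand ℂ n b) := by
  rw [comp_X_pow_eq_compAlgHom hn, map_div₀, compAlgHom_algebraMap, compAlgHom_algebraMap,
    expand_eq_comp_X_pow, expand_eq_comp_X_pow]

theorem comp_mul_zpow_X_pow {n : ℕ} (hn : n ≠ 0) (g : RatFunc ℂ) (t : ℤ) :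
    comp (g * RatFunc.X ^ t) (RatFunc.X ^ n) = comp g (RatFunc.X ^ n) * RatFunc.X ^ (n * t) := by
  rw [comp_X_pow_eq_compAlgHom hn, comp_X_pow_eq_compAlgHom hn, map_mul, map_zpow₀, compAlgHom_X,
    map_pow, RatFunc.algebraMap_X, zpow_mul, zpow_natCast]

theorem exists_num_comp_and_denom_comp_eq_C_mul {p : ℂ[X]} (hp : p.natDegree ≠ 0) {q : RatFunc ℂ}
    {μ : ℂ} (hμ : μ ≠ 0) (h : comp q (algebraMap ℂ[X] (RatFunc ℂ) p) = RatFunc.C μ * q) :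
    ∃ c : ℂ, q.num.comp p = C (μ * c) * q.num ∧ q.denom.comp p = C c * q.denom := by
  have hD : q.denom ≠ 0 := q.denom_ne_zero
  have hDp : q.denom.comp p ≠ 0 := (comp_eq_zero_iff_of_natDegree_ne_zero hp).not.mpr hD
  have hpoly : q.num.comp p * q.denom = (C μ * q.num) * q.denom.comp p := by
    rw [comp_algebraMap, div_eq_iff (RatFunc.algebraMap_ne_zero hDp)] at h
    have hq := (div_eq_iff (RatFunc.algebraMap_ne_zero hD)).mp q.num_div_denom
    apply RatFunc.algebraMap_injective ℂ
    simp only [map_mul, RatFunc.algebraMap_C]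
    linear_combination algebraMap ℂ[X] (RatFunc ℂ) q.denom * h
      - RatFunc.C μ * algebraMap ℂ[X] (RatFunc ℂ) (q.denom.comp p) * hq
  have hcop : IsCoprime (q.num.comp p) (q.denom.comp p) := by
    simpa only [AlgHom.toRingHom_eq_coe, RingHom.coe_coe, ← comp_eq_aeval]
      using q.isCoprime_num_denom.map (aeval p : ℂ[X] →ₐ[ℂ] ℂ[X]).toRingHom
  have hcop' : IsCoprime (C μ * q.num) q.denom :=
    (isCoprime_mul_unit_left_left (isUnit_C.mpr hμ.isUnit) _ _).mpr q.isCoprime_num_denom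
  obtain ⟨u, hu⟩ := (IsCoprime.associated_of_mul_eq_mul hcop hcop' hpoly).symm
  obtain ⟨c, -, hc⟩ := Polynomial.isUnit_iff.mp u.isUnit
  have hDc : q.denom.comp p = C c * q.denom := by rw [← hu, ← hc, mul_comm]
  refine ⟨c, mul_right_cancel₀ hD ?_, hDc⟩
  rw [hpoly, hDc, C_mul]
  ring

theorem exists_eq_comp_X_pow_mul_X_zpow {n : ℕ} (hn : 0 < n) {α : ℂ} (hα : IsPrimitiveRoot α n)
    {q : RatFunc ℂ} (hq : q ≠ 0) {μ : ℂ} (hμ : μ ≠ 0)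
    (h : comp q (RatFunc.C α * RatFunc.X) = RatFunc.C μ * q) :
    ∃ e : ℤ, μ = α ^ e ∧ ∃ g : RatFunc ℂ, q = comp g (RatFunc.X ^ n) * RatFunc.X ^ e := by
  have hα0 : α ≠ 0 := hα.ne_zero hn.ne'
  have hrot : RatFunc.C α * RatFunc.X = algebraMap ℂ[X] (RatFunc ℂ) (C α * X) := by
    rw [map_mul, RatFunc.algebraMap_C, RatFunc.algebraMap_X]
  have hrot_deg : (C α * X).natDegree ≠ 0 := (natDegree_C_mul_X α hα0).trans_ne one_ne_zero
  obtain ⟨c, hN, hD⟩ := exists_num_comp_and_denom_comp_eq_C_mul hrot_deg hμ (hrot ▸ h)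
  obtain ⟨r₁, -, hr₁, p₁, hp₁⟩ :=
    exists_eq_expand_mul_X_pow_of_comp_C_mul_X_eq hn hα (RatFunc.num_ne_zero hq) hN
  obtain ⟨r₂, -, hr₂, p₂, hp₂⟩ :=
    exists_eq_expand_mul_X_pow_of_comp_C_mul_X_eq hn hα q.denom_ne_zero hD
  refine ⟨r₁ - r₂, ?_, algebraMap ℂ[X] (RatFunc ℂ) p₁ / algebraMap ℂ[X] (RatFunc ℂ) p₂, ?_⟩
  · rw [zpow_sub₀ hα0, zpow_natCast, zpow_natCast, ← hr₁, ← hr₂,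
      mul_div_cancel_right₀ _ (hr₂ ▸ pow_ne_zero r₂ hα0)]
  · rw [comp_div_X_pow hn.ne', ← RatFunc.algebraMap_X,
      zpow_sub₀ (RatFunc.algebraMap_ne_zero X_ne_zero), zpow_natCast, zpow_natCast,
      div_mul_div_comm, ← map_pow, ← map_pow, ← map_mul, ← map_mul,
      ← hp₁, ← hp₂, q.num_div_denom]

end ParallelTensor

theorem stmt_13_general (n : ℕ) (hn : 2 ≤ n) (α : ℂ) (hα : IsPrimitiveRoot α n)
    (k : ℕ) (lam : ℂ) (hlam : lam ≠ 0) (q : RatFunc ℂ) (hq : q ≠ 0)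
    (heq : ParallelTensor.comp q (RatFunc.C α * RatFunc.X) * RatFunc.C (α ^ k)
            = RatFunc.C lam * q) :
    ∃ j : ℕ, j < n ∧ lam = α ^ j ∧
      ∃ g : RatFunc ℂ,
        q = ParallelTensor.comp g (RatFunc.X ^ n) * RatFunc.X ^ ((j : ℤ) - (k : ℤ)) := by
  have hn0 : 0 < n := by omega
  have hα0 : α ≠ 0 := hα.ne_zero hn0.ne'
  have hαk : α ^ k ≠ 0 := pow_ne_zero k hα0
  obtain ⟨e, he, g, hg⟩ := ParallelTensor.exists_eq_comp_X_pow_mul_X_zpow hn0 hα hq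
    (div_ne_zero hlam hαk) (by
      rw [map_div₀, div_mul_eq_mul_div, eq_div_iff ((_root_.map_ne_zero RatFunc.C).mpr hαk), heq])
  obtain ⟨j, t, hjn, hejk⟩ : ∃ j : ℕ, ∃ t : ℤ, j < n ∧ e + k = n * t + j := by
    have h0 := Int.emod_nonneg (e + k) (Int.natCast_ne_zero.mpr hn0.ne')
    have h1 := Int.emod_lt_of_pos (e + k) (Int.natCast_pos.mpr hn0)
    have h2 := Int.mul_ediv_add_emod (e + k) n
    exact ⟨((e + k) % n).toNat, (e + k) / n, by omega, by omega⟩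
  refine ⟨j, hjn, ?_, g * RatFunc.X ^ t, ?_⟩
  · have hlam' : lam = α ^ (e + k) := by
      rw [zpow_add₀ hα0, ← he, zpow_natCast, div_mul_cancel₀ _ hαk]
    rw [hlam', hejk, zpow_add₀ hα0, zpow_mul, zpow_natCast, hα.pow_eq_one, one_zpow, one_mul,
      zpow_natCast]
  · rw [hg, ParallelTensor.comp_mul_zpow_X_pow hn0.ne', mul_assoc, ← zpow_add₀ RatFunc.X_ne_zero]
    congr 2
    omega

/-- Parallel `k`-differentials of the rotation `z ↦ αz`, `α` a primitive `n`-th root of unity: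
`λ = α^j` for some `0 ≤ j < n` and `q(z) = g(zⁿ)·z^(j-k)`. -/
theorem stmt_13 (n : ℕ) (hn : 2 ≤ n) (α : ℂ) (hα : IsPrimitiveRoot α n)
    (k : ℕ) (hk : 1 ≤ k) (lam : ℂ) (hlam : lam ≠ 0) (q : RatFunc ℂ) (hq : q ≠ 0)
    (heq : ParallelTensor.comp q (RatFunc.C α * RatFunc.X) * RatFunc.C (α ^ k)
            = RatFunc.C lam * q) :
    ∃ j : ℕ, j < n ∧ lam = α ^ j ∧
      ∃ g : RatFunc ℂ,
        q = ParallelTensor.comp g (RatFunc.X ^ n) * RatFunc.X ^ ((j : ℤ) - (k : ℤ)) :=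
  stmt_13_general n hn α hα k lam hlam q hq heq

end
end
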